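/- arXiv:1703.06987 — 8 statements merged into one kernel-verified Lean document; each statement's English description precedes it below -/
import Mathlib

section
/- The union of all lower (downward closed) subsets of ℕ₀^d of cardinality at most k equals the hyperbolic cross set Λ_k^HC = { i ∈ ℕ₀^d : ∏_{j=1}^d (i_j + 1) ≤ k }. -/
/-- A set `S ⊆ ℕ₀^d` is lower (downward closed) if it is closed under
componentwise decrease. -/
def IsLowerMultiSet {d : ℕ} (S : Set (Fin d → ℕ)) : Prop :=
  ∀ i ∈ S, ∀ i' : Fin d → ℕ, (∀ j, i' j ≤ i j) → i' ∈ S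

lemma box_coe {d : ℕ} (i : Fin d → ℕ) :
    ((Fintype.piFinset (fun j => Finset.range (i j + 1)) : Finset (Fin d → ℕ)) : Set (Fin d → ℕ))
      = {i' : Fin d → ℕ | ∀ j, i' j ≤ i j} := by
  ext x
  simp [Nat.lt_succ_iff]

lemma box_ncard {d : ℕ} (i : Fin d → ℕ) :
    Set.ncard {i' : Fin d → ℕ | ∀ j, i' j ≤ i j} = ∏ j, (i j + 1) := by
  rw [← box_coe, Set.ncard_coe_finset, Fintype.card_piFinset]
  simp

/-- The union of all lower subsets of `ℕ₀^d` of cardinality at most `k`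
equals the hyperbolic cross `Λ_k^HC`. -/
theorem union_lower_sets_eq_hyperbolic_cross (d k : ℕ) :
    ⋃₀ {S : Set (Fin d → ℕ) | IsLowerMultiSet S ∧ S.Finite ∧ S.ncard ≤ k}
      = {i : Fin d → ℕ | ∏ j, (i j + 1) ≤ k} := by
  ext i
  simp only [Set.mem_sUnion, Set.mem_setOf_eq]
  constructor
  · rintro ⟨S, ⟨hl, hf, hc⟩, hi⟩
    have hsub : {i' : Fin d → ℕ | ∀ j, i' j ≤ i j} ⊆ S := fun x hx => hl i hi x hx
    calc ∏ j, (i j + 1) = Set.ncard {i' : Fin d → ℕ | ∀ j, i' j ≤ i j} := (box_ncard i).symm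
      _ ≤ S.ncard := Set.ncard_le_ncard hsub hf
      _ ≤ k := hc
  · intro h
    refine ⟨{i' : Fin d → ℕ | ∀ j, i' j ≤ i j}, ⟨?_, ?_, ?_⟩, fun j => le_refl _⟩
    · intro a ha b hb j
      exact le_trans (hb j) (ha j)
    · rw [← box_coe]; exact (Fintype.piFinset _).finite_toSet
    · rw [box_ncard]; exact h
end

section
/- Let S be a lower subset of ℕ₀^d with |S| ≤ k and u_i = ∏_{j=1}^d √(2 i_j + 1) (Legendre weights). Then the weighted cardinality satisfies |S|_u = ∑_{i ∈ S} ∏_{j=1}^d (2 i_j + 1) ≤ k². -/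
/-!
Each index `i` contributes `∏ j, (2 * i j + 1)`, which is the number of pairs `(a, b)` with
`a ⊔ b = i` (coordinatewise max): in each coordinate there are `2 * i j + 1` pairs of naturals
with maximum `i j`. Since `S` is lower, all these pairs lie in `S × S`, and pairs for different
`i` are different, so the sum is at most `#S ^ 2 ≤ k ^ 2`.
-/

open Finset

section SupFiber

variable {α : Type*} [Lattice α] [LocallyFiniteOrderBot α] [DecidableEq α]

def supFiber (x : α) : Finset (α × α) :=
  {p ∈ Iic x ×ˢ Iic x | p.1 ⊔ p.2 = x}

@[simp]
lemma mem_supFiber {x : α} {p : α × α} : p ∈ supFiber x ↔ p.1 ⊔ p.2 = x := by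
  simp only [supFiber, mem_filter, mem_product, mem_Iic, and_iff_right_iff_imp]
  rintro rfl
  exact ⟨le_sup_left, le_sup_right⟩

lemma sum_card_supFiber_le_sq {S : Finset α} (hS : IsLowerSet (S : Set α)) :
    ∑ x ∈ S, #(supFiber x) ≤ #S ^ 2 := by
  have fiber_eq : ∀ x ∈ S, supFiber x = {p ∈ S ×ˢ S | p.1 ⊔ p.2 = x} := by
    intro x hx
    ext p
    simp only [mem_supFiber, mem_filter, mem_product, iff_and_self]
    rintro rfl
    exact ⟨hS le_sup_left hx, hS le_sup_right hx⟩
  calc ∑ x ∈ S, #(supFiber x) = ∑ x ∈ S, #{p ∈ S ×ˢ S | p.1 ⊔ p.2 = x} :=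
        sum_congr rfl fun x hx => by rw [fiber_eq x hx]
    _ = #{p ∈ S ×ˢ S | p.1 ⊔ p.2 ∈ S} := sum_card_fiberwise_eq_card_filter _ _ _
    _ ≤ #(S ×ˢ S) := card_filter_le _ _
    _ = #S ^ 2 := by rw [card_product, sq]

end SupFiber

lemma supFiber_eq_sdiff {α : Type*} [LinearOrder α] [LocallyFiniteOrderBot α] (x : α) :
    supFiber x = Iic x ×ˢ Iic x \ Iio x ×ˢ Iio x := by
  ext p
  simp only [mem_supFiber, mem_sdiff, mem_product, mem_Iic, mem_Iio]
  constructor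
  · rintro rfl
    exact ⟨⟨le_sup_left, le_sup_right⟩, fun h => lt_irrefl _ (sup_lt_iff.2 h)⟩
  · rintro ⟨⟨h1, h2⟩, h⟩
    exact le_antisymm (sup_le h1 h2) (not_lt.1 fun hlt => h (sup_lt_iff.1 hlt))

lemma Nat.card_supFiber (n : ℕ) : #(supFiber n) = 2 * n + 1 := by
  rw [supFiber_eq_sdiff,
    card_sdiff_of_subset (product_subset_product Iio_subset_Iic_self Iio_subset_Iic_self),
    card_product, card_product, Nat.card_Iic, Nat.card_Iio,
    show (n + 1) * (n + 1) = n * n + (2 * n + 1) by ring, Nat.add_sub_cancel_left]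

lemma Pi.card_supFiber {ι : Type*} [Fintype ι] [DecidableEq ι] {α : ι → Type*}
    [∀ i, Lattice (α i)] [∀ i, LocallyFiniteOrderBot (α i)] [∀ i, DecidableEq (α i)]
    (x : ∀ i, α i) : #(supFiber x) = ∏ i, #(supFiber (x i)) := by
  rw [← Fintype.card_piFinset]
  refine card_equiv (Equiv.arrowProdEquivProdArrow ι α α).symm fun p => ?_
  simp [funext_iff]

lemma isLowerMultiSet_iff_isLowerSet {d : ℕ} {S : Set (Fin d → ℕ)} :
    IsLowerMultiSet S ↔ IsLowerSet S :=
  ⟨fun h _ _ hle hi => h _ hi _ hle, fun h _ hi _ hle => h hle hi⟩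

/-- For a lower set `S ⊆ ℕ₀^d` with `|S| ≤ k` and Legendre weights
`u_i = ∏_j √(2 i_j + 1)`, the weighted cardinality satisfies `|S|_u ≤ k²`. -/
theorem legendre_weighted_card_lower_set (d k : ℕ) (S : Finset (Fin d → ℕ))
    (hlower : IsLowerMultiSet (↑S : Set (Fin d → ℕ))) (hcard : S.card ≤ k) :
    ∑ i ∈ S, ∏ j, (2 * i j + 1) ≤ k ^ 2 := by
  calc ∑ i ∈ S, ∏ j, (2 * i j + 1) = ∑ i ∈ S, #(supFiber i) := by
        simp only [Pi.card_supFiber, Nat.card_supFiber]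
    _ ≤ #S ^ 2 := sum_card_supFiber_le_sq (isLowerMultiSet_iff_isLowerSet.1 hlower)
    _ ≤ k ^ 2 := Nat.pow_le_pow_left hcard 2
end

section
/- Let S be a lower subset of ℕ₀^d with |S| ≤ k and u_i = 2^{‖i‖₀/2} (Chebyshev weights). Then |S|_u = ∑_{i ∈ S} 2^{‖i‖₀} ≤ k^{log 3 / log 2}. -/
/-!
Slice a lower set `S ⊆ ℕ^(d+1)` by its first coordinate: the slices `S_j ⊆ ℕ^d` are lower sets
with `S_0 ⊇ S_1 ⊇ ⋯`, and passing from `S_j` to `S` multiplies the weight `c^{‖i‖₀}` by `c` exactly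
when `j ≠ 0`. With `c = 2^p - 1` and `n_j = |S_j|`, induction on `d` reduces the claim
`∑_{i∈S} c^{‖i‖₀} ≤ |S|^p` to `n_0^p + c ∑_{j≥1} n_j^p ≤ (∑_j n_j)^p`. By convexity of `t ↦ t^p`,
the increment of `t^p` over `[x, x + y]` dominates the one over `[y, 2y]`, which is `c y^p`
whenever `y ≤ x`; adding the `n_j`, `j ≥ 1`, one at a time gives the inequality. For
`p = log 3 / log 2` we have `c = 2`.
-/

open Finset

theorem ConvexOn.map_add_sub_map_le_map_add_sub_map {s : Set ℝ} {f : ℝ → ℝ}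
    (hf : ConvexOn ℝ s f) {a b d : ℝ} (ha : a ∈ s) (hbd : b + d ∈ s) (hab : a ≤ b)
    (hd : 0 ≤ d) : f (a + d) - f a ≤ f (b + d) - f b := by
  rcases (add_nonneg (sub_nonneg.2 hab) hd).eq_or_lt with hl | hl
  · obtain rfl : b = a := by linarith
    obtain rfl : d = 0 := by linarith
    simp
  -- `a + d` and `b` are the convex combinations of `a` and `b + d` with swapped weights
  set t := d / (b - a + d)
  have ht0 : 0 ≤ t := div_nonneg hd hl.le
  have ht1 : t ≤ 1 := div_le_one_of_le₀ (by linarith) hl.le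
  have h₁ := hf.2 ha hbd (sub_nonneg.2 ht1) ht0 (sub_add_cancel 1 t)
  have h₂ := hf.2 ha hbd ht0 (sub_nonneg.2 ht1) (add_sub_cancel t 1)
  have e₁ : (1 - t) • a + t • (b + d) = a + d := by
    simp only [smul_eq_mul, t]; field_simp; ring
  have e₂ : t • a + (1 - t) • (b + d) = b := by
    simp only [smul_eq_mul, t]; field_simp; ring
  rw [e₁] at h₁
  rw [e₂] at h₂
  simp only [smul_eq_mul] at h₁ h₂
  linarith

theorem rpow_add_mul_rpow_le_add_rpow {p x y : ℝ} (hp : 1 ≤ p) (hy : 0 ≤ y) (hyx : y ≤ x) :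
    x ^ p + (2 ^ p - 1) * y ^ p ≤ (x + y) ^ p := by
  have := (convexOn_rpow hp).map_add_sub_map_le_map_add_sub_map (Set.mem_Ici.2 hy)
    (Set.mem_Ici.2 (by linarith : 0 ≤ x + y)) hyx hy
  rw [← two_mul, Real.mul_rpow zero_le_two hy] at this
  linarith

theorem rpow_add_mul_sum_rpow_le_add_sum_rpow {ι : Type*} {p x : ℝ} {y : ι → ℝ} {s : Finset ι}
    (hp : 1 ≤ p) (hy : ∀ j ∈ s, 0 ≤ y j ∧ y j ≤ x) :
    x ^ p + (2 ^ p - 1) * ∑ j ∈ s, y j ^ p ≤ (x + ∑ j ∈ s, y j) ^ p := by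
  classical
  induction s using Finset.induction_on with
  | empty => simp
  | insert a s ha ih =>
    obtain ⟨hya, hyax⟩ := hy a (mem_insert_self a s)
    have hs : ∀ j ∈ s, 0 ≤ y j ∧ y j ≤ x := fun j hj => hy j (mem_insert_of_mem hj)
    have hx : x ≤ x + ∑ j ∈ s, y j :=
      le_add_of_nonneg_right (sum_nonneg fun j hj => (hs j hj).1)
    rw [sum_insert ha, sum_insert ha, ← add_assoc, add_right_comm x]
    calc x ^ p + (2 ^ p - 1) * (y a ^ p + ∑ j ∈ s, y j ^ p)
        = x ^ p + (2 ^ p - 1) * ∑ j ∈ s, y j ^ p + (2 ^ p - 1) * y a ^ p := by ring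
      _ ≤ (x + ∑ j ∈ s, y j) ^ p + (2 ^ p - 1) * y a ^ p := by gcongr; exact ih hs
      _ ≤ (x + ∑ j ∈ s, y j + y a) ^ p :=
        rpow_add_mul_rpow_le_add_rpow hp hya (hyax.trans hx)

section Slices

variable {d : ℕ}

noncomputable def sliceFirst (S : Finset (Fin (d + 1) → ℕ)) (j : ℕ) : Finset (Fin d → ℕ) :=
  S.preimage (Fin.cons (α := fun _ => ℕ) j)
    (Fin.cons_right_injective (α := fun _ => ℕ) j).injOn

@[simp]
theorem mem_sliceFirst {S : Finset (Fin (d + 1) → ℕ)} {j : ℕ} {m : Fin d → ℕ} :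
    m ∈ sliceFirst S j ↔ (Fin.cons j m : Fin (d + 1) → ℕ) ∈ S :=
  Finset.mem_preimage

theorem IsLowerMultiSet.isLowerMultiSet_sliceFirst {S : Finset (Fin (d + 1) → ℕ)}
    (hS : IsLowerMultiSet (S : Set (Fin (d + 1) → ℕ))) (j : ℕ) :
    IsLowerMultiSet (sliceFirst S j : Set (Fin d → ℕ)) := fun _ hm _ hm' =>
  mem_sliceFirst.2 <| hS _ (mem_sliceFirst.1 hm) _ <| Fin.forall_fin_succ.2 ⟨le_rfl, hm'⟩

theorem IsLowerMultiSet.antitone_sliceFirst {S : Finset (Fin (d + 1) → ℕ)}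
    (hS : IsLowerMultiSet (S : Set (Fin (d + 1) → ℕ))) : Antitone (sliceFirst S) :=
  fun _ _ hjj' _ hm => mem_sliceFirst.2 <| hS _ (mem_sliceFirst.1 hm) _ <|
    Fin.forall_fin_succ.2 ⟨hjj', fun _ => le_rfl⟩

theorem sum_eq_sum_range_sum_sliceFirst {M : Type*} [AddCommMonoid M]
    {S : Finset (Fin (d + 1) → ℕ)} {n : ℕ} (hS : ∀ i ∈ S, i 0 < n)
    (f : (Fin (d + 1) → ℕ) → M) :
    ∑ i ∈ S, f i = ∑ j ∈ range n, ∑ m ∈ sliceFirst S j, f (Fin.cons j m) := by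
  classical
  rw [← sum_fiberwise_of_maps_to (g := fun i => i 0) fun i hi => mem_range.2 (hS i hi)]
  refine sum_congr rfl fun j _ => ?_
  rw [sliceFirst, sum_preimage']
  congr 1
  ext i
  simp only [mem_filter, Set.mem_range]
  constructor
  · rintro ⟨hi, rfl⟩
    exact ⟨hi, Fin.tail i, Fin.cons_self_tail i⟩
  · rintro ⟨hi, m, rfl⟩
    exact ⟨hi, rfl⟩

end Slices

theorem pow_card_ne_zero_cons {R : Type*} [Monoid R] {d : ℕ} (c : R) (j : ℕ) (m : Fin d → ℕ) :
    c ^ #{l | (Fin.cons j m : Fin (d + 1) → ℕ) l ≠ 0}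
      = (if j = 0 then 1 else c) * c ^ #{l | m l ≠ 0} := by
  rw [card_filter, card_filter, Fin.sum_univ_succ]
  by_cases hj : j = 0 <;> simp [hj, pow_add]

theorem sum_pow_card_ne_zero_le_card_rpow {p : ℝ} (hp : 1 ≤ p) :
    ∀ {d : ℕ} {S : Finset (Fin d → ℕ)}, IsLowerMultiSet (S : Set (Fin d → ℕ)) →
      ∑ i ∈ S, (2 ^ p - 1) ^ #{j | i j ≠ 0} ≤ (#S : ℝ) ^ p
  | 0, S, _ => by
    simp only [univ_eq_empty, filter_empty, card_empty, pow_zero, sum_const, nsmul_one]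
    rcases Nat.eq_zero_or_pos #S with hS | hS
    · simp [hS, Real.zero_rpow (by linarith : p ≠ 0)]
    · exact Real.self_le_rpow_of_one_le (by exact_mod_cast hS) hp
  | d + 1, S, hS => by
    set c : ℝ := 2 ^ p - 1
    set N := S.sup (· 0)
    have hN : ∀ i ∈ S, i 0 < N + 1 := fun i hi => Nat.lt_succ_of_le (le_sup (f := (· 0)) hi)
    have hc : 0 ≤ c := sub_nonneg.2 (Real.one_le_rpow one_le_two (by linarith))
    have hweight : ∑ i ∈ S, c ^ #{j | i j ≠ 0} = ∑ m ∈ sliceFirst S 0, c ^ #{l | m l ≠ 0}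
        + c * ∑ j ∈ range N, ∑ m ∈ sliceFirst S (j + 1), c ^ #{l | m l ≠ 0} := by
      rw [sum_eq_sum_range_sum_sliceFirst hN, sum_range_succ', add_comm, mul_sum]
      simp only [pow_card_ne_zero_cons, ↓reduceIte, one_mul, Nat.add_eq_zero_iff, one_ne_zero,
        and_false, mul_sum]
    have hcard : (#S : ℝ) = #(sliceFirst S 0) + ∑ j ∈ range N, (#(sliceFirst S (j + 1)) : ℝ) := by
      rw [card_eq_sum_ones, sum_eq_sum_range_sum_sliceFirst hN, sum_range_succ', add_comm]
      simp
    have hslices : ∀ j ∈ range N, (0 : ℝ) ≤ #(sliceFirst S (j + 1))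
        ∧ (#(sliceFirst S (j + 1)) : ℝ) ≤ #(sliceFirst S 0) := fun j _ =>
      ⟨Nat.cast_nonneg _, by exact_mod_cast card_le_card (hS.antitone_sliceFirst (Nat.zero_le _))⟩
    calc ∑ i ∈ S, c ^ #{j | i j ≠ 0}
        ≤ (#(sliceFirst S 0) : ℝ) ^ p + c * ∑ j ∈ range N, (#(sliceFirst S (j + 1)) : ℝ) ^ p := by
          rw [hweight]
          gcongr with j
          · exact sum_pow_card_ne_zero_le_card_rpow hp (hS.isLowerMultiSet_sliceFirst 0)
          · exact sum_pow_card_ne_zero_le_card_rpow hp (hS.isLowerMultiSet_sliceFirst (j + 1))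
      _ ≤ (#S : ℝ) ^ p := hcard ▸ rpow_add_mul_sum_rpow_le_add_sum_rpow hp hslices

/-- For a lower set `S ⊆ ℕ₀^d` with `|S| ≤ k` and Chebyshev weights
`u_i = 2^{‖i‖₀/2}`, the weighted cardinality satisfies
`|S|_u = ∑_{i∈S} 2^{‖i‖₀} ≤ k^{log 3 / log 2}`. -/
theorem chebyshev_weighted_card_lower_set (d k : ℕ) (S : Finset (Fin d → ℕ))
    (hlower : IsLowerMultiSet (↑S : Set (Fin d → ℕ))) (hcard : S.card ≤ k) :
    (∑ i ∈ S, (2 : ℝ) ^ (Finset.univ.filter fun j => i j ≠ 0).card)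
      ≤ (k : ℝ) ^ (Real.log 3 / Real.log 2) := by
  have hγ : 1 ≤ Real.log 3 / Real.log 2 := by
    rw [le_div_iff₀ (Real.log_pos one_lt_two), one_mul]
    exact Real.log_le_log two_pos (by norm_num)
  have hc : (2 : ℝ) ^ (Real.log 3 / Real.log 2) - 1 = 2 := by
    rw [show Real.log 3 / Real.log 2 = Real.logb 2 3 from rfl,
      Real.rpow_logb two_pos (by norm_num) three_pos]
    norm_num
  calc (∑ i ∈ S, (2 : ℝ) ^ (Finset.univ.filter fun j => i j ≠ 0).card)
      = ∑ i ∈ S, ((2 : ℝ) ^ (Real.log 3 / Real.log 2) - 1) ^ #{j | i j ≠ 0} := by rw [hc]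
    _ ≤ (S.card : ℝ) ^ (Real.log 3 / Real.log 2) := sum_pow_card_ne_zero_le_card_rpow hγ hlower
    _ ≤ (k : ℝ) ^ (Real.log 3 / Real.log 2) := by gcongr
end

section
/- For d ≥ 1 and 2 ≤ k ≤ 2^{d+1}, there exists a lower set S ⊆ ℕ₀^d with |S| ≤ k such that ∑_{i∈S} 2^{‖i‖₀} ≥ k^{log 3/log 2}/3. -/
open Finset

theorem isLowerMultiSet_piFinset_range {d : ℕ} (n : Fin d → ℕ) :
    IsLowerMultiSet (↑(Fintype.piFinset fun j => range (n j)) : Set (Fin d → ℕ)) := by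
  intro i hi i' hle
  simp only [mem_coe, Fintype.mem_piFinset, mem_range] at hi ⊢
  exact fun j => (hle j).trans_lt (hi j)

theorem pow_card_support_eq_prod {ι R : Type*} [Fintype ι] [CommMonoid R] (a : R)
    (i : ι → ℕ) : a ^ #{j | i j ≠ 0} = ∏ j, if i j ≠ 0 then a else 1 := by
  rw [prod_ite, prod_const, prod_const_one, mul_one]

section UnitCube

variable {ι : Type*} [Fintype ι] [DecidableEq ι]

def unitCube (T : Finset ι) : Finset (ι → ℕ) :=
  Fintype.piFinset fun j => range (if j ∈ T then 2 else 1)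

theorem card_unitCube (T : Finset ι) : #(unitCube T) = 2 ^ #T := by
  simp [unitCube, Fintype.card_piFinset, apply_ite, prod_ite_mem]

theorem sum_two_pow_card_support_unitCube {R : Type*} [CommSemiring R] (T : Finset ι) :
    ∑ i ∈ unitCube T, (2 : R) ^ #{j | i j ≠ 0} = 3 ^ #T := by
  simp_rw [pow_card_support_eq_prod]
  rw [unitCube, ← prod_univ_sum (fun j => range (if j ∈ T then 2 else 1))
    (fun _ x => if x ≠ 0 then (2 : R) else 1)]
  have hfactor : ∀ j, ∑ x ∈ range (if j ∈ T then 2 else 1), (if x ≠ 0 then (2 : R) else 1)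
      = if j ∈ T then 3 else 1 := by
    intro j
    split_ifs <;> norm_num [sum_range_succ]
  simp_rw [hfactor, prod_ite_mem, univ_inter, prod_const]

end UnitCube

theorem two_pow_rpow_logb_two_three (n : ℕ) :
    ((2 : ℝ) ^ n) ^ Real.logb 2 3 = 3 ^ n := by
  rw [← Real.rpow_pow_comm zero_le_two, Real.rpow_logb two_pos (by norm_num) three_pos]

theorem exists_two_pow_lt_le_two_pow_succ {d k : ℕ} (hk : 2 ≤ k) (hk2 : k ≤ 2 ^ (d + 1)) :
    ∃ m ≤ d, 2 ^ m < k ∧ k ≤ 2 ^ (m + 1) := by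
  have hclog_pos : 0 < Nat.clog 2 k := Nat.clog_pos one_lt_two hk
  have hclog_le : Nat.clog 2 k ≤ d + 1 :=
    (Nat.clog_mono_right 2 hk2).trans_eq (Nat.clog_pow 2 (d + 1) one_lt_two)
  refine ⟨Nat.clog 2 k - 1, by omega, Nat.pow_pred_clog_lt_self one_lt_two hk, ?_⟩
  rw [Nat.sub_add_cancel hclog_pos]
  exact Nat.le_pow_clog one_lt_two k

theorem chebyshev_weighted_card_lower_bound_general (d k : ℕ)
    (hk : 2 ≤ k) (hk2 : k ≤ 2 ^ (d + 1)) :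
    ∃ S : Finset (Fin d → ℕ), IsLowerMultiSet (↑S : Set (Fin d → ℕ)) ∧
      S.card ≤ k ∧
      (k : ℝ) ^ (Real.log 3 / Real.log 2) / 3
        ≤ ∑ i ∈ S, (2 : ℝ) ^ (Finset.univ.filter fun j => i j ≠ 0).card := by
  obtain ⟨m, hmd, hlow, hhigh⟩ := exists_two_pow_lt_le_two_pow_succ hk hk2
  obtain ⟨T, -, hT⟩ := exists_subset_card_eq (s := (univ : Finset (Fin d))) (by simpa using hmd)
  refine ⟨unitCube T, isLowerMultiSet_piFinset_range _, by rw [card_unitCube, hT]; omega, ?_⟩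
  rw [sum_two_pow_card_support_unitCube, hT, Real.log_div_log]
  have hkc : (k : ℝ) ^ Real.logb 2 3 ≤ 3 ^ (m + 1) := by
    rw [← two_pow_rpow_logb_two_three]
    gcongr
    · exact Real.logb_nonneg one_lt_two (by norm_num)
    · exact_mod_cast hhigh
  rw [pow_succ] at hkc
  linarith

/-- For `d ≥ 1` and `2 ≤ k ≤ 2^{d+1}`, there exists a lower set `S ⊆ ℕ₀^d`
with `|S| ≤ k` such that `∑_{i∈S} 2^{‖i‖₀} ≥ k^{log 3/log 2}/3`. -/
theorem chebyshev_weighted_card_lower_bound (d k : ℕ) (hd : 1 ≤ d)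
    (hk : 2 ≤ k) (hk2 : k ≤ 2 ^ (d + 1)) :
    ∃ S : Finset (Fin d → ℕ), IsLowerMultiSet (↑S : Set (Fin d → ℕ)) ∧
      S.card ≤ k ∧
      (k : ℝ) ^ (Real.log 3 / Real.log 2) / 3
        ≤ ∑ i ∈ S, (2 : ℝ) ^ (Finset.univ.filter fun j => i j ≠ 0).card :=
  chebyshev_weighted_card_lower_bound_general d k hk hk2
end

section
/- (Weighted Stechkin estimate) Let w = (w_i) be weights with w_i ≥ 1, c ∈ ℓ²(I) over a countable index set I, and s > ‖w‖_∞². If T ⊆ I is such that the complement S = I \ T satisfies |S|_w = ∑_{i∈S} w_i² ≤ s in the sense used below, then one has the bound ‖c_T‖₂ ≤ ‖c‖_{1,w} / √(s − ‖w‖_∞²) whenever T is the complement of a weighted-best approximation support of weighted cardinality s. Concretely: for any c and s > ‖w‖²_∞, inf over supports S with |S|_w ≤ s of ‖c − c_S‖₂ is at most ‖c‖_{1,w}/√(s − ‖w‖²_∞). -/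
/-!
Threshold at level `t > 0`: keep the indices with `|c_i| > t w_i`. On the kept set
`t w_i² ≤ w_i |c_i|`, so its weighted cardinality is at most `‖c‖_{1,w} / t`; off it
`|c_i|² ≤ t w_i |c_i|`, so the discarded energy is at most `t ‖c‖_{1,w}`. The choice
`t = ‖c‖_{1,w} / (s - W²)` balances the two.
-/

section WeightedThreshold

variable {I : Type*} {w a : I → ℝ} {t : ℝ}

theorem finite_setOf_mul_lt_of_summable (hw : ∀ i, 1 ≤ w i) (ha : ∀ i, 0 ≤ a i)
    (hsum : Summable fun i => w i * a i) (ht : 0 < t) :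
    {i | t * w i < a i}.Finite := by
  refine (Filter.eventually_cofinite.1
    (hsum.tendsto_cofinite_zero.eventually (gt_mem_nhds ht))).subset fun i hi => ?_
  have hi : t * w i < a i := hi
  have : t ≤ w i * a i := calc
    t ≤ t * w i := le_mul_of_one_le_right ht.le (hw i)
    _ ≤ a i := hi.le
    _ ≤ w i * a i := le_mul_of_one_le_left (ha i) (hw i)
  exact this.not_gt

theorem mul_sum_sq_le_tsum_of_forall_mem (hw : ∀ i, 0 ≤ w i) (ha : ∀ i, 0 ≤ a i)
    (hsum : Summable fun i => w i * a i) {S : Finset I} (hS : ∀ i ∈ S, t * w i ≤ a i) :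
    t * ∑ i ∈ S, w i ^ 2 ≤ ∑' i, w i * a i :=
  calc t * ∑ i ∈ S, w i ^ 2 = ∑ i ∈ S, w i * (t * w i) := by
        rw [Finset.mul_sum]; exact Finset.sum_congr rfl fun i _ => by ring
    _ ≤ ∑ i ∈ S, w i * a i :=
        Finset.sum_le_sum fun i hi => mul_le_mul_of_nonneg_left (hS i hi) (hw i)
    _ ≤ ∑' i, w i * a i :=
        hsum.sum_le_tsum S fun i _ => mul_nonneg (hw i) (ha i)

theorem tsum_ite_sq_le_mul_tsum_of_forall_notMem [DecidableEq I] (hw : ∀ i, 0 ≤ w i)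
    (ha : ∀ i, 0 ≤ a i) (hsum : Summable fun i => w i * a i) (ht : 0 ≤ t) {S : Finset I}
    (hS : ∀ i ∉ S, a i ≤ t * w i) :
    ∑' i, (if i ∈ S then 0 else a i ^ 2) ≤ t * ∑' i, w i * a i := by
  have hle : ∀ i, (if i ∈ S then 0 else a i ^ 2) ≤ t * (w i * a i) := fun i => by
    split_ifs with hi
    · exact mul_nonneg ht (mul_nonneg (hw i) (ha i))
    · nlinarith [hS i hi, ha i]
  have hnonneg : ∀ i, 0 ≤ if i ∈ S then 0 else a i ^ 2 := fun i => by
    split_ifs <;> positivity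
  rw [← tsum_mul_left]
  exact (Summable.of_nonneg_of_le hnonneg hle (hsum.mul_left t)).tsum_le_tsum hle
    (hsum.mul_left t)

theorem exists_finset_threshold [DecidableEq I] (hw : ∀ i, 1 ≤ w i) (ha : ∀ i, 0 ≤ a i)
    (hsum : Summable fun i => w i * a i) (ht : 0 < t) :
    ∃ S : Finset I, t * ∑ i ∈ S, w i ^ 2 ≤ ∑' i, w i * a i ∧
      ∑' i, (if i ∈ S then 0 else a i ^ 2) ≤ t * ∑' i, w i * a i := by
  have hw₀ : ∀ i, 0 ≤ w i := fun i => zero_le_one.trans (hw i)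
  set S := (finite_setOf_mul_lt_of_summable hw ha hsum ht).toFinset
  refine ⟨S, mul_sum_sq_le_tsum_of_forall_mem hw₀ ha hsum fun i hi => ?_,
    tsum_ite_sq_le_mul_tsum_of_forall_notMem hw₀ ha hsum ht.le fun i hi => ?_⟩
  · exact (Set.Finite.mem_toFinset _ |>.1 hi).le
  · simpa [S] using hi

theorem exists_finset_sum_sq_le_and_tsum_le [DecidableEq I] (hw : ∀ i, 1 ≤ w i)
    (ha : ∀ i, 0 ≤ a i) (hsum : Summable fun i => w i * a i) {d : ℝ} (hd : 0 < d) :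
    ∃ S : Finset I, ∑ i ∈ S, w i ^ 2 ≤ d ∧
      ∑' i, (if i ∈ S then 0 else a i ^ 2) ≤ (∑' i, w i * a i) ^ 2 / d := by
  rcases (tsum_nonneg fun i => mul_nonneg (zero_le_one.trans (hw i)) (ha i)).eq_or_lt
    with hσ | hσ
  · obtain ⟨S, hS, htail⟩ := exists_finset_threshold hw ha hsum one_pos
    rw [← hσ, one_mul] at hS htail
    exact ⟨S, hS.trans hd.le, htail.trans_eq (by rw [← hσ]; ring)⟩
  · obtain ⟨S, hS, htail⟩ := exists_finset_threshold hw ha hsum (div_pos hσ hd)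
    refine ⟨S, ?_, htail.trans_eq (by ring)⟩
    rw [div_mul_eq_mul_div, div_le_iff₀ hd] at hS
    exact le_of_mul_le_mul_left hS hσ

end WeightedThreshold

theorem weighted_stechkin_general {I : Type*} [DecidableEq I]
    (w : I → ℝ) (hw : ∀ i, 1 ≤ w i) (W : ℝ)
    (c : I → ℂ) (hsum : Summable fun i => w i * ‖c i‖)
    (s : ℝ) (hs : W ^ 2 < s) :
    ∃ S : Finset I, (∑ i ∈ S, (w i) ^ 2) ≤ s ∧
      Real.sqrt (∑' i, if i ∈ S then 0 else ‖c i‖ ^ 2)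
        ≤ (∑' i, w i * ‖c i‖) / Real.sqrt (s - W ^ 2) := by
  obtain ⟨S, hS, htail⟩ := exists_finset_sum_sq_le_and_tsum_le hw (fun i => norm_nonneg (c i))
    hsum (sub_pos.2 hs)
  have hσ : 0 ≤ ∑' i, w i * ‖c i‖ :=
    tsum_nonneg fun i => mul_nonneg (zero_le_one.trans (hw i)) (norm_nonneg _)
  refine ⟨S, hS.trans (sub_le_self _ (sq_nonneg W)), ?_⟩
  calc Real.sqrt (∑' i, if i ∈ S then 0 else ‖c i‖ ^ 2)
      ≤ Real.sqrt ((∑' i, w i * ‖c i‖) ^ 2 / (s - W ^ 2)) := Real.sqrt_le_sqrt htail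
    _ = (∑' i, w i * ‖c i‖) / Real.sqrt (s - W ^ 2) := by
      rw [Real.sqrt_div (sq_nonneg _), Real.sqrt_sq hσ]

/-- Weighted Stechkin estimate (Rauhut–Ward): for weights `w_i ≥ 1` bounded by
`W`, any `c ∈ ℓ¹_w(I)` and any `s > W²`, there is a support `S` of weighted
cardinality `|S|_w ≤ s` with `‖c − c_S‖₂ ≤ ‖c‖_{1,w}/√(s − W²)`. -/
theorem weighted_stechkin {I : Type*} [Countable I] [DecidableEq I]
    (w : I → ℝ) (hw : ∀ i, 1 ≤ w i) (W : ℝ) (hW : ∀ i, w i ≤ W)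
    (c : I → ℂ) (hsum : Summable fun i => w i * ‖c i‖)
    (s : ℝ) (hs : W ^ 2 < s) :
    ∃ S : Finset I, (∑ i ∈ S, (w i) ^ 2) ≤ s ∧
      Real.sqrt (∑' i, if i ∈ S then 0 else ‖c i‖ ^ 2)
        ≤ (∑' i, w i * ‖c i‖) / Real.sqrt (s - W ^ 2) :=
  weighted_stechkin_general w hw W c hsum s hs
end

section
/- (Lower RIP implies error bound along the recovery argument) Let A ∈ ℂ^{m×n}, s > 0, and suppose there are constants 0 < ρ < 1 and τ > 0 such that for every index set S ⊆ {1,...,n} with ∑_{i∈S} u_i² ≤ s and every d ∈ ℂⁿ: ‖d_S‖₂ ≤ (ρ/√s)‖d_{Sᶜ}‖_{1,u} + τ‖A d‖₂ (weighted robust null space property). Let ĉ be a minimizer of ‖d‖_{1,u} subject to ‖y − A d‖₂ ≤ η, and let c be feasible (‖y − A c‖₂ ≤ η). Then for any S with ∑_{i∈S} u_i² ≤ s, ‖c − ĉ‖_{1,u} ≤ (2(1+ρ)/(1−ρ)) ‖c_{Sᶜ}‖_{1,u} + (4τ/(1−ρ)) √s η. -/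
/-!
Put `d = c - ĉ`. Both `c` and `ĉ` are feasible, so `‖A d‖₂ ≤ 2η`. Cauchy–Schwarz with
`∑_{i ∈ S} u_i² ≤ s` turns the robust null space property into the weighted `ℓ¹` bound
`‖d_S‖_{1,u} ≤ ρ ‖d_{Sᶜ}‖_{1,u} + 2τ√s η`, while minimality of `ĉ` gives the cone constraint
`‖d_{Sᶜ}‖_{1,u} ≤ ‖d_S‖_{1,u} + 2‖c_{Sᶜ}‖_{1,u}`. Eliminating `‖d_{Sᶜ}‖_{1,u}` between the two
bounds the whole of `‖d‖_{1,u}`.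
-/

open Finset

theorem sqrt_sum_norm_sq_sub_le {ι E : Type*} [Fintype ι] [SeminormedAddCommGroup E]
    (f g : ι → E) :
    √(∑ i, ‖f i - g i‖ ^ 2) ≤ √(∑ i, ‖f i‖ ^ 2) + √(∑ i, ‖g i‖ ^ 2) := by
  simpa only [PiLp.norm_eq_of_L2, WithLp.ofLp_sub, Pi.sub_apply, WithLp.ofLp_toLp] using
    norm_sub_le (WithLp.toLp 2 f : PiLp 2 fun _ : ι => E) (WithLp.toLp 2 g)

theorem sqrt_sum_norm_mulVec_sub_le {m n : ℕ} (A : Matrix (Fin m) (Fin n) ℂ)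
    (y : Fin m → ℂ) (c c' : Fin n → ℂ) :
    √(∑ j, ‖A.mulVec (c - c') j‖ ^ 2)
      ≤ √(∑ j, ‖y j - A.mulVec c' j‖ ^ 2) + √(∑ j, ‖y j - A.mulVec c j‖ ^ 2) := by
  have hres : ∀ j, A.mulVec (c - c') j = (y j - A.mulVec c' j) - (y j - A.mulVec c j) := by
    intro j
    simp only [Matrix.mulVec_sub, Pi.sub_apply]
    ring
  simp only [hres]
  exact sqrt_sum_norm_sq_sub_le _ _

theorem sum_mul_norm_le_sqrt_mul_sqrt {ι E : Type*} [SeminormedAddCommGroup E]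
    {S : Finset ι} {u : ι → ℝ} {s : ℝ} (hS : ∑ i ∈ S, u i ^ 2 ≤ s) (d : ι → E) :
    ∑ i ∈ S, u i * ‖d i‖ ≤ √s * √(∑ i ∈ S, ‖d i‖ ^ 2) :=
  calc ∑ i ∈ S, u i * ‖d i‖
      ≤ √(∑ i ∈ S, u i ^ 2) * √(∑ i ∈ S, ‖d i‖ ^ 2) := Real.sum_mul_le_sqrt_mul_sqrt _ _ _
    _ ≤ √s * √(∑ i ∈ S, ‖d i‖ ^ 2) := by gcongr

theorem sum_mul_norm_le_of_robust_nsp {ι E : Type*} [SeminormedAddCommGroup E]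
    {S : Finset ι} {u : ι → ℝ} {s ρ τ tail residual : ℝ} (hs : 0 < s)
    (hS : ∑ i ∈ S, u i ^ 2 ≤ s) {d : ι → E}
    (hnsp : √(∑ i ∈ S, ‖d i‖ ^ 2) ≤ ρ / √s * tail + τ * residual) :
    ∑ i ∈ S, u i * ‖d i‖ ≤ ρ * tail + τ * √s * residual :=
  calc ∑ i ∈ S, u i * ‖d i‖
      ≤ √s * (ρ / √s * tail + τ * residual) :=
        (sum_mul_norm_le_sqrt_mul_sqrt hS d).trans (by gcongr)
    _ = ρ * tail + τ * √s * residual := by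
        field_simp [(Real.sqrt_pos.mpr hs).ne']

theorem sum_compl_mul_norm_sub_le {ι E : Type*} [Fintype ι] [DecidableEq ι]
    [SeminormedAddCommGroup E] {u : ι → ℝ} (hu : ∀ i, 0 ≤ u i) {c c' : ι → E}
    (hmin : ∑ i, u i * ‖c' i‖ ≤ ∑ i, u i * ‖c i‖) (S : Finset ι) :
    ∑ i ∈ Sᶜ, u i * ‖c i - c' i‖
      ≤ ∑ i ∈ S, u i * ‖c i - c' i‖ + 2 * ∑ i ∈ Sᶜ, u i * ‖c i‖ := by
  have hon : ∑ i ∈ S, u i * ‖c i‖ ≤ ∑ i ∈ S, u i * ‖c i - c' i‖ + ∑ i ∈ S, u i * ‖c' i‖ := by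
    rw [← sum_add_distrib]
    refine sum_le_sum fun i _ => ?_
    rw [← mul_add]
    exact mul_le_mul_of_nonneg_left (norm_le_norm_sub_add (c i) (c' i)) (hu i)
  have hoff : ∑ i ∈ Sᶜ, u i * ‖c i - c' i‖ ≤ ∑ i ∈ Sᶜ, u i * ‖c i‖ + ∑ i ∈ Sᶜ, u i * ‖c' i‖ := by
    rw [← sum_add_distrib]
    refine sum_le_sum fun i _ => ?_
    rw [← mul_add]
    exact mul_le_mul_of_nonneg_left (norm_sub_le (c i) (c' i)) (hu i)
  rw [← sum_add_sum_compl S, ← sum_add_sum_compl S (fun i => u i * ‖c i‖)] at hmin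
  linarith

theorem add_le_div_of_le_mul_add_of_le_add {a x C e ρ : ℝ} (hρ0 : -1 ≤ ρ) (hρ1 : ρ < 1)
    (ha : a ≤ ρ * x + e) (hx : x ≤ a + 2 * C) :
    a + x ≤ 2 * (1 + ρ) / (1 - ρ) * C + 2 * e / (1 - ρ) := by
  have h1ρ : 0 < 1 - ρ := by linarith
  have hx' : (1 - ρ) * x ≤ 2 * C + e := by linarith
  rw [div_mul_eq_mul_div, ← add_div, le_div_iff₀ h1ρ]
  nlinarith

theorem weighted_nsp_recovery_general (m n : ℕ) (A : Matrix (Fin m) (Fin n) ℂ)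
    (u : Fin n → ℝ) (hu : ∀ i, 1 ≤ u i)
    (s : ℝ) (hs : 0 < s) (ρ τ : ℝ) (hρ0 : 0 < ρ) (hρ1 : ρ < 1) (hτ : 0 < τ)
    (hNSP : ∀ S : Finset (Fin n), (∑ i ∈ S, (u i) ^ 2) ≤ s →
      ∀ d : Fin n → ℂ,
        Real.sqrt (∑ i ∈ S, ‖d i‖ ^ 2)
          ≤ ρ / Real.sqrt s * (∑ i ∈ Sᶜ, u i * ‖d i‖)
            + τ * Real.sqrt (∑ j, ‖A.mulVec d j‖ ^ 2))
    (y : Fin m → ℂ) (η : ℝ) (c chat : Fin n → ℂ)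
    (hchatfeas : Real.sqrt (∑ j, ‖y j - A.mulVec chat j‖ ^ 2) ≤ η)
    (hmin : ∀ d : Fin n → ℂ,
      Real.sqrt (∑ j, ‖y j - A.mulVec d j‖ ^ 2) ≤ η →
        (∑ i, u i * ‖chat i‖) ≤ ∑ i, u i * ‖d i‖)
    (hcfeas : Real.sqrt (∑ j, ‖y j - A.mulVec c j‖ ^ 2) ≤ η)
    (S : Finset (Fin n)) (hS : (∑ i ∈ S, (u i) ^ 2) ≤ s) :
    (∑ i, u i * ‖c i - chat i‖)
      ≤ 2 * (1 + ρ) / (1 - ρ) * (∑ i ∈ Sᶜ, u i * ‖c i‖)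
        + 4 * τ / (1 - ρ) * Real.sqrt s * η := by
  have hresidual : √(∑ j, ‖A.mulVec (c - chat) j‖ ^ 2) ≤ 2 * η := by
    linarith [sqrt_sum_norm_mulVec_sub_le A y c chat]
  have hhead : ∑ i ∈ S, u i * ‖c i - chat i‖
      ≤ ρ * ∑ i ∈ Sᶜ, u i * ‖c i - chat i‖ + 2 * τ * √s * η := by
    have h := sum_mul_norm_le_of_robust_nsp hs hS (hNSP S hS (c - chat))
    have : τ * √s * √(∑ j, ‖A.mulVec (c - chat) j‖ ^ 2) ≤ τ * √s * (2 * η) := by gcongr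
    simp only [Pi.sub_apply] at h
    linarith
  have hcone := sum_compl_mul_norm_sub_le (fun i => zero_le_one.trans (hu i))
    (hmin c hcfeas) S
  calc ∑ i, u i * ‖c i - chat i‖
      = ∑ i ∈ S, u i * ‖c i - chat i‖ + ∑ i ∈ Sᶜ, u i * ‖c i - chat i‖ :=
        (sum_add_sum_compl S _).symm
    _ ≤ 2 * (1 + ρ) / (1 - ρ) * ∑ i ∈ Sᶜ, u i * ‖c i‖ + 2 * (2 * τ * √s * η) / (1 - ρ) :=
        add_le_div_of_le_mul_add_of_le_add (by linarith) hρ1 hhead hcone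
    _ = 2 * (1 + ρ) / (1 - ρ) * ∑ i ∈ Sᶜ, u i * ‖c i‖ + 4 * τ / (1 - ρ) * √s * η := by ring

/-- Weighted robust null space property implies the weighted `ℓ¹` error bound
for minimizers of weighted `ℓ¹` minimization with feasible ground truth. -/
theorem weighted_nsp_recovery (m n : ℕ) (A : Matrix (Fin m) (Fin n) ℂ)
    (u : Fin n → ℝ) (hu : ∀ i, 1 ≤ u i)
    (s : ℝ) (hs : 0 < s) (ρ τ : ℝ) (hρ0 : 0 < ρ) (hρ1 : ρ < 1) (hτ : 0 < τ)
    (hNSP : ∀ S : Finset (Fin n), (∑ i ∈ S, (u i) ^ 2) ≤ s →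
      ∀ d : Fin n → ℂ,
        Real.sqrt (∑ i ∈ S, ‖d i‖ ^ 2)
          ≤ ρ / Real.sqrt s * (∑ i ∈ Sᶜ, u i * ‖d i‖)
            + τ * Real.sqrt (∑ j, ‖A.mulVec d j‖ ^ 2))
    (y : Fin m → ℂ) (η : ℝ) (hη : 0 ≤ η) (c chat : Fin n → ℂ)
    (hchatfeas : Real.sqrt (∑ j, ‖y j - A.mulVec chat j‖ ^ 2) ≤ η)
    (hmin : ∀ d : Fin n → ℂ,
      Real.sqrt (∑ j, ‖y j - A.mulVec d j‖ ^ 2) ≤ η →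
        (∑ i, u i * ‖chat i‖) ≤ ∑ i, u i * ‖d i‖)
    (hcfeas : Real.sqrt (∑ j, ‖y j - A.mulVec c j‖ ^ 2) ≤ η)
    (S : Finset (Fin n)) (hS : (∑ i ∈ S, (u i) ^ 2) ≤ s) :
    (∑ i, u i * ‖c i - chat i‖)
      ≤ 2 * (1 + ρ) / (1 - ρ) * (∑ i ∈ Sᶜ, u i * ‖c i‖)
        + 4 * τ / (1 - ρ) * Real.sqrt s * η :=
  weighted_nsp_recovery_general m n A u hu s hs ρ τ hρ0 hρ1 hτ hNSP y η c chat hchatfeas hmin hcfeas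
    S hS
end

section
/- Let A ∈ ℂ^{m×n} (m ≤ n) have full rank m, let e ∈ ℂ^m, 0 ≤ η < ‖e‖₂, and u = (u_i) weights with u_i ≥ 1. Then the quantity T = min{ ‖d‖_{1,u} : d ∈ ℂⁿ, ‖A d − e‖₂ ≤ η } satisfies T ≤ (√(∑_{i=1}^n u_i²) / σ_min(A*)) (‖e‖₂ − η), where σ_min(A*) is the smallest singular value of A*. -/
/-!
The feasible point is a rescaled preimage `d = (1 - η / ‖e‖) w` of `e`, where `w` is taken in the
range of the adjoint: `w = A* x` with `A A* x = e`. Since `‖A* y‖² = re ⟪y, A A* y⟫`, the lower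
bound `σ ‖y‖ ≤ ‖A* y‖` makes `A A*` injective, hence invertible, and then
`‖w‖² = re ⟪x, e⟫ ≤ ‖x‖ ‖e‖ ≤ ‖w‖ ‖e‖ / σ`. Cauchy–Schwarz turns the resulting Euclidean bound
`σ ‖d‖ ≤ ‖e‖ - η` into the bound on the weighted `ℓ¹` norm.
-/

open scoped InnerProductSpace

theorem LinearMap.exists_preimage_mul_norm_le_of_adjoint_bounded_below {𝕜 E F : Type*} [RCLike 𝕜]
    [NormedAddCommGroup E] [InnerProductSpace 𝕜 E] [FiniteDimensional 𝕜 E]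
    [NormedAddCommGroup F] [InnerProductSpace 𝕜 F] [FiniteDimensional 𝕜 F]
    (T : E →ₗ[𝕜] F) {σ : ℝ} (hσ : 0 < σ) (hT : ∀ y, σ * ‖y‖ ≤ ‖T.adjoint y‖) (e : F) :
    ∃ w, T w = e ∧ σ * ‖w‖ ≤ ‖e‖ := by
  have norm_sq_adjoint (y : F) : ‖T.adjoint y‖ ^ 2 = RCLike.re ⟪y, (T ∘ₗ T.adjoint) y⟫_𝕜 := by
    rw [← inner_self_eq_norm_sq (𝕜 := 𝕜), LinearMap.adjoint_inner_left, LinearMap.comp_apply]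
  have hinj : Function.Injective (T ∘ₗ T.adjoint) := by
    refine (injective_iff_map_eq_zero _).2 fun y hy => norm_le_zero_iff.1 ?_
    have hadj : T.adjoint y = 0 := by
      rw [← norm_eq_zero, ← sq_eq_zero_iff (M₀ := ℝ), norm_sq_adjoint, hy, inner_zero_right,
        map_zero]
    exact le_of_mul_le_mul_left (by simpa [hadj] using hT y) hσ
  obtain ⟨x, hx⟩ := LinearMap.injective_iff_surjective.1 hinj e
  set w := T.adjoint x
  refine ⟨w, hx, ?_⟩
  have hsq : ‖w‖ ^ 2 ≤ ‖x‖ * ‖e‖ := by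
    rw [norm_sq_adjoint, hx]
    exact (RCLike.re_le_norm _).trans (norm_inner_le_norm x e)
  have hmul : σ * ‖w‖ * ‖w‖ ≤ ‖e‖ * ‖w‖ := by nlinarith [hT x, norm_nonneg e]
  rcases (norm_nonneg w).eq_or_lt with hw | hw
  · simp [← hw]
  · exact le_of_mul_le_mul_right hmul hw

theorem LinearMap.exists_norm_apply_sub_eq_and_mul_norm_le {𝕜 E F : Type*} [RCLike 𝕜]
    [SeminormedAddCommGroup E] [NormedSpace 𝕜 E] [NormedAddCommGroup F] [NormedSpace 𝕜 F]
    (T : E →ₗ[𝕜] F) {σ : ℝ} {w : E} {e : F} (hw : T w = e) (hσw : σ * ‖w‖ ≤ ‖e‖)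
    {η : ℝ} (hη : 0 ≤ η) (hηe : η ≤ ‖e‖) :
    ∃ d, ‖T d - e‖ = η ∧ σ * ‖d‖ ≤ ‖e‖ - η := by
  have hc : 0 ≤ 1 - η / ‖e‖ := sub_nonneg.2 (div_le_one_of_le₀ hηe (norm_nonneg e))
  refine ⟨((1 - η / ‖e‖ : ℝ) : 𝕜) • w, ?_, ?_⟩
  · have : T (((1 - η / ‖e‖ : ℝ) : 𝕜) • w) - e = ((-(η / ‖e‖) : ℝ) : 𝕜) • e := by
      rw [map_smul, hw, ← sub_eq_zero]
      push_cast
      module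
    rw [this, norm_smul, RCLike.norm_ofReal, abs_neg, abs_of_nonneg (by positivity)]
    exact div_mul_cancel_of_imp fun he => le_antisymm (he ▸ hηe) hη
  · calc σ * ‖((1 - η / ‖e‖ : ℝ) : 𝕜) • w‖ = (1 - η / ‖e‖) * (σ * ‖w‖) := by
          rw [norm_smul, RCLike.norm_ofReal, abs_of_nonneg hc]; ring
      _ ≤ (1 - η / ‖e‖) * ‖e‖ := by gcongr
      _ = ‖e‖ - η := by
          rw [sub_mul, one_mul, div_mul_cancel_of_imp fun he => le_antisymm (he ▸ hηe) hη]

theorem EuclideanSpace.sum_mul_norm_le_sqrt_mul_norm {𝕜 ι : Type*} [RCLike 𝕜] [Fintype ι]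
    (u : ι → ℝ) (d : EuclideanSpace 𝕜 ι) : ∑ i, u i * ‖d i‖ ≤ √(∑ i, u i ^ 2) * ‖d‖ := by
  rw [EuclideanSpace.norm_eq]
  exact Real.sum_mul_le_sqrt_mul_sqrt _ _ _

theorem tail_error_bound_general (m n : ℕ)
    (A : Matrix (Fin m) (Fin n) ℂ)
    (u : Fin n → ℝ)
    (σ : ℝ) (hσ : 0 < σ)
    (hσmin : ∀ x : Fin m → ℂ,
      σ * Real.sqrt (∑ j, ‖x j‖ ^ 2) ≤ Real.sqrt (∑ i, ‖A.conjTranspose.mulVec x i‖ ^ 2))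
    (e : Fin m → ℂ) (η : ℝ) (hη : 0 ≤ η)
    (hηe : η < Real.sqrt (∑ j, ‖e j‖ ^ 2)) :
    ∃ d : Fin n → ℂ,
      Real.sqrt (∑ j, ‖A.mulVec d j - e j‖ ^ 2) ≤ η ∧
      (∑ i, u i * ‖d i‖)
        ≤ Real.sqrt (∑ i, (u i) ^ 2) / σ
            * (Real.sqrt (∑ j, ‖e j‖ ^ 2) - η) := by
  set T := Matrix.toEuclideanLin A
  have hT (y : EuclideanSpace ℂ (Fin m)) : σ * ‖y‖ ≤ ‖T.adjoint y‖ := by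
    rw [← Matrix.toEuclideanLin_conjTranspose_eq_adjoint, Matrix.toLpLin_apply,
      EuclideanSpace.norm_eq, EuclideanSpace.norm_eq]
    exact hσmin y
  have he : ‖WithLp.toLp 2 e‖ = √(∑ j, ‖e j‖ ^ 2) := EuclideanSpace.norm_eq _
  obtain ⟨w, hw, hσw⟩ := T.exists_preimage_mul_norm_le_of_adjoint_bounded_below hσ hT _
  obtain ⟨d, hd, hσd⟩ :=
    T.exists_norm_apply_sub_eq_and_mul_norm_le hw hσw hη (he ▸ hηe.le)
  refine ⟨d.ofLp, ?_, ?_⟩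
  · rw [← hd, EuclideanSpace.norm_eq]
    rfl
  · calc ∑ i, u i * ‖d i‖ ≤ √(∑ i, u i ^ 2) * ‖d‖ :=
          EuclideanSpace.sum_mul_norm_le_sqrt_mul_norm u d
      _ ≤ √(∑ i, u i ^ 2) / σ * (√(∑ j, ‖e j‖ ^ 2) - η) := by
          rw [div_mul_eq_mul_div, le_div_iff₀ hσ, mul_assoc, ← he]
          gcongr
          linarith

/-- Bound on the tail term `T_u(A, e, η)`: if `A ∈ ℂ^{m×n}` has full rank `m`
and `σ > 0` is the smallest singular value of `A*` (characterized by the lower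
bound `σ‖x‖₂ ≤ ‖A* x‖₂`), then for `0 ≤ η < ‖e‖₂` there is a feasible `d` with
`‖A d − e‖₂ ≤ η` and `‖d‖_{1,u} ≤ √(∑ u_i²)/σ · (‖e‖₂ − η)`. -/
theorem tail_error_bound (m n : ℕ) (hmn : m ≤ n)
    (A : Matrix (Fin m) (Fin n) ℂ) (hrank : A.rank = m)
    (u : Fin n → ℝ) (hu : ∀ i, 1 ≤ u i)
    (σ : ℝ) (hσ : 0 < σ)
    (hσmin : ∀ x : Fin m → ℂ,
      σ * Real.sqrt (∑ j, ‖x j‖ ^ 2) ≤ Real.sqrt (∑ i, ‖A.conjTranspose.mulVec x i‖ ^ 2))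
    (e : Fin m → ℂ) (η : ℝ) (hη : 0 ≤ η)
    (hηe : η < Real.sqrt (∑ j, ‖e j‖ ^ 2)) :
    ∃ d : Fin n → ℂ,
      Real.sqrt (∑ j, ‖A.mulVec d j - e j‖ ^ 2) ≤ η ∧
      (∑ i, u i * ‖d i‖)
        ≤ Real.sqrt (∑ i, (u i) ^ 2) / σ
            * (Real.sqrt (∑ j, ‖e j‖ ^ 2) - η) :=
  tail_error_bound_general m n A u σ hσ hσmin e η hη hηe
end

section
/- The cardinality of the hyperbolic cross Λ_k^HC in dimension d satisfies |Λ_k^HC| ≤ 2 k³ 4^d for all k ≥ 1 and d ≥ 1. -/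
open Finset

private def HCfin (d k : ℕ) : Finset (Fin d → ℕ) :=
  (Fintype.piFinset fun _ => Finset.range k).filter fun i => ∏ j, (i j + 1) ≤ k

private lemma mem_HCfin {d k : ℕ} {i : Fin d → ℕ} :
    i ∈ HCfin d k ↔ ∏ j, (i j + 1) ≤ k := by
  constructor
  · intro h
    exact (Finset.mem_filter.mp h).2
  · intro h
    refine Finset.mem_filter.mpr ⟨Fintype.mem_piFinset.mpr fun j => ?_, h⟩
    have h1 : i j + 1 ≤ ∏ j, (i j + 1) :=
      Finset.single_le_prod' (fun j _ => Nat.le_add_left 1 (i j)) (Finset.mem_univ j)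
    exact Finset.mem_range.mpr (lt_of_lt_of_le (Nat.lt_succ_self _) (h1.trans h))

private lemma HCfin_card_succ (d k : ℕ) :
    (HCfin (d+1) k).card ≤ ∑ m ∈ Finset.range k, (HCfin d (k / (m+1))).card := by
  classical
  set φ : (Fin (d+1) → ℕ) → ℕ × (Fin d → ℕ) := fun i => (i 0, fun j => i j.succ) with hφ
  have hinj : Set.InjOn φ (HCfin (d+1) k) := by
    intro a _ b _ hab
    funext j
    have h0 : a 0 = b 0 := congrArg Prod.fst hab
    have h1 : (fun j : Fin d => a j.succ) = fun j => b j.succ := congrArg Prod.snd hab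
    refine Fin.cases h0 (fun j => ?_) j
    exact congrFun h1 j
  have hcard : (HCfin (d+1) k).card = ((HCfin (d+1) k).image φ).card :=
    (Finset.card_image_of_injOn hinj).symm
  rw [hcard]
  have hsub : (HCfin (d+1) k).image φ ⊆
      (Finset.range k).biUnion fun m => ({m} : Finset ℕ) ×ˢ HCfin d (k / (m+1)) := by
    intro p hp
    obtain ⟨i, hi, hip⟩ := Finset.mem_image.mp hp
    have hprod : ∏ j, (i j + 1) ≤ k := mem_HCfin.mp hi
    have hsplit : (i 0 + 1) * ∏ j : Fin d, (i j.succ + 1) = ∏ j, (i j + 1) := by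
      rw [Fin.prod_univ_succ]
    have hle : ∏ j : Fin d, (i j.succ + 1) ≤ k / (i 0 + 1) :=
      Nat.le_div_iff_mul_le (Nat.succ_pos _) |>.mpr
        (by rw [mul_comm]; rw [hsplit]; exact hprod)
    have hi0 : i 0 < k := by
      have h1 : i 0 + 1 ≤ ∏ j, (i j + 1) :=
        Finset.single_le_prod' (fun j _ => Nat.le_add_left 1 (i j)) (Finset.mem_univ 0)
      exact lt_of_lt_of_le (Nat.lt_succ_self _) (h1.trans hprod)
    refine Finset.mem_biUnion.mpr ⟨i 0, Finset.mem_range.mpr hi0, ?_⟩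
    rw [← hip]
    exact Finset.mem_product.mpr ⟨Finset.mem_singleton_self _, mem_HCfin.mpr hle⟩
  calc ((HCfin (d+1) k).image φ).card
      ≤ ((Finset.range k).biUnion fun m => ({m} : Finset ℕ) ×ˢ HCfin d (k / (m+1))).card :=
        Finset.card_le_card hsub
    _ ≤ ∑ m ∈ Finset.range k, (({m} : Finset ℕ) ×ˢ HCfin d (k / (m+1))).card :=
        Finset.card_biUnion_le
    _ = ∑ m ∈ Finset.range k, (HCfin d (k / (m+1))).card := by
        simp [Finset.card_product]

private lemma sum_inv_cube (k : ℕ) :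
    ∑ m ∈ Finset.range k, (1:ℝ) / ((m:ℝ)+1)^3 ≤ 2 := by
  have h : ∀ n : ℕ, ∑ m ∈ Finset.range (n+1), (1:ℝ) / ((m:ℝ)+1)^3 ≤ 2 - 1/((n:ℝ)+1) := by
    intro n
    induction n with
    | zero => norm_num
    | succ n ih =>
      rw [Finset.sum_range_succ]
      push_cast
      have hn : (0:ℝ) < (n:ℝ) + 1 := by positivity
      have hn2 : (0:ℝ) < (n:ℝ) + 2 := by positivity
      have key : (1:ℝ) / ((n:ℝ)+1+1)^3 ≤ 1/((n:ℝ)+1) - 1/((n:ℝ)+1+1) := by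
        have heq : (1:ℝ)/((n:ℝ)+1) - 1/((n:ℝ)+1+1) = 1/(((n:ℝ)+1)*((n:ℝ)+2)) := by
          rw [div_sub_div _ _ (ne_of_gt hn) (by positivity)]
          refine (div_eq_div_iff (by positivity) (by positivity)).mpr ?_
          ring
        rw [heq]
        apply one_div_le_one_div_of_le (by positivity)
        nlinarith [sq_nonneg ((n:ℝ)+2)]
      linarith
  cases k with
  | zero => norm_num
  | succ n =>
    calc ∑ m ∈ Finset.range (n+1), (1:ℝ) / ((m:ℝ)+1)^3 ≤ 2 - 1/((n:ℝ)+1) := h n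
      _ ≤ 2 := by
          have : (0:ℝ) ≤ 1/((n:ℝ)+1) := by positivity
          linarith

private lemma HCfin_card_bound (d : ℕ) : ∀ k, (HCfin d k).card ≤ 2 * k ^ 3 * 4 ^ d := by
  induction d with
  | zero =>
    intro k
    rcases Nat.eq_zero_or_pos k with hk | hk
    · subst hk
      have : HCfin 0 0 = ∅ := by
        ext i
        simp [mem_HCfin]
      simp [this]
    · have : (HCfin 0 k).card ≤ 1 := by
        apply Finset.card_le_one.mpr
        intro a _ b _
        funext j; exact absurd j.2 (by omega)
      calc (HCfin 0 k).card ≤ 1 := this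
        _ ≤ 2 * k ^ 3 * 4 ^ 0 := by
            have : 1 ≤ k ^ 3 := Nat.one_le_pow _ _ hk
            simpa using Nat.le_mul_of_pos_left 1 (by omega)
    | succ d ih =>
      intro k
      have h1 : (HCfin (d+1) k).card ≤ ∑ m ∈ Finset.range k, (HCfin d (k / (m+1))).card :=
        HCfin_card_succ d k
      have h2 : ∑ m ∈ Finset.range k, (HCfin d (k / (m+1))).card ≤
          ∑ m ∈ Finset.range k, 2 * (k / (m+1)) ^ 3 * 4 ^ d :=
        Finset.sum_le_sum fun m _ => ih _
      -- now bound ∑ (k/(m+1))^3 ≤ 2 k^3 via reals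
      have h3 : ∑ m ∈ Finset.range k, (k / (m+1)) ^ 3 ≤ 2 * k ^ 3 := by
        rw [← Nat.cast_le (α := ℝ)]
        push_cast
        have hterm : ∀ m ∈ Finset.range k,
            ((k / (m+1) : ℕ) : ℝ) ^ 3 ≤ (k:ℝ)^3 * (1 / ((m:ℝ)+1)^3) := by
          intro m _
          have hdiv : ((k / (m+1) : ℕ) : ℝ) ≤ (k:ℝ) / ((m:ℝ)+1) := by
            have := Nat.cast_div_le (α := ℝ) (m := k) (n := m+1)
            push_cast at this
            exact this
          have hnn : (0:ℝ) ≤ ((k / (m+1) : ℕ) : ℝ) := Nat.cast_nonneg _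
          calc ((k / (m+1) : ℕ) : ℝ) ^ 3 ≤ ((k:ℝ) / ((m:ℝ)+1)) ^ 3 :=
                pow_le_pow_left₀ hnn hdiv 3
            _ = (k:ℝ)^3 * (1 / ((m:ℝ)+1)^3) := by
                rw [div_pow]; ring
        calc ∑ m ∈ Finset.range k, ((k / (m+1) : ℕ) : ℝ) ^ 3
            ≤ ∑ m ∈ Finset.range k, (k:ℝ)^3 * (1 / ((m:ℝ)+1)^3) :=
              Finset.sum_le_sum hterm
          _ = (k:ℝ)^3 * ∑ m ∈ Finset.range k, (1:ℝ) / ((m:ℝ)+1)^3 := by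
              rw [Finset.mul_sum]
          _ ≤ (k:ℝ)^3 * 2 :=
              mul_le_mul_of_nonneg_left (sum_inv_cube k) (by positivity)
          _ = 2 * (k:ℝ)^3 := by ring
      calc (HCfin (d+1) k).card
          ≤ ∑ m ∈ Finset.range k, 2 * (k / (m+1)) ^ 3 * 4 ^ d := h1.trans h2
        _ = 2 * 4 ^ d * ∑ m ∈ Finset.range k, (k / (m+1)) ^ 3 := by
            rw [Finset.mul_sum]; apply Finset.sum_congr rfl; intro m _; ring
        _ ≤ 2 * 4 ^ d * (2 * k ^ 3) := Nat.mul_le_mul_left _ h3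
        _ ≤ 2 * k ^ 3 * 4 ^ (d+1) := by ring_nf; omega

/-- Cardinality bound for the hyperbolic cross: `|Λ_k^HC| ≤ 2 k³ 4^d`. -/
theorem hyperbolic_cross_card_bound (d k : ℕ) (hd : 1 ≤ d) (hk : 1 ≤ k) :
    {i : Fin d → ℕ | ∏ j, (i j + 1) ≤ k}.Finite ∧
      {i : Fin d → ℕ | ∏ j, (i j + 1) ≤ k}.ncard ≤ 2 * k ^ 3 * 4 ^ d := by
  have hset : {i : Fin d → ℕ | ∏ j, (i j + 1) ≤ k} = ↑(HCfin d k) := by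
    ext i
    simp [mem_HCfin]
  rw [hset]
  refine ⟨(HCfin d k).finite_toSet, ?_⟩
  rw [Set.ncard_coe_finset]
  exact HCfin_card_bound d k
end
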